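/- (Reproducing property of the slice normalized Szegő kernel.) Let c : ℕ → ℍ with Σ_n |c_n| < ∞. Then for every a ∈ 𝔹 and every I ∈ 𝕊: (1/2π) ∫₀^{2π} conj(e_a(e^{It})) · F_c(e^{It}) dt = √(1−|a|²) · F_c(a), where e_a(e^{It}) := √(1−|a|²) Σ_n e^{Int} conj(a)^n. In particular the value is independent of I, and a need not lie in the slice ℂ_I. -/

import Mathlib

noncomputable section

local notation "ℍ" => Quaternion ℝ

/-- The power series function `F_c(q) = Σ_n q^n c_n` associated to a coefficient
sequence `c : ℕ → ℍ`. -/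
def Fc (c : ℕ → ℍ) (q : ℍ) : ℍ := ∑' n, q ^ n * c n

/-- Cauchy product `(b ⋆ c)_n = Σ_{k=0}^n b_k c_{n-k}` of coefficient sequences,
i.e. the coefficient sequence of the slice `*`-product. -/
def cprod (b c : ℕ → ℍ) : ℕ → ℍ := fun n => ∑ k ∈ Finset.range (n + 1), b k * c (n - k)

/-- Coefficient sequence `ε(a)_n = √(1-|a|²) conj(a)^n` of the slice normalized
Szegő kernel `e_a`. -/
def eps (a : ℍ) : ℕ → ℍ := fun n => Real.sqrt (1 - ‖a‖ ^ 2) • (star a) ^ n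

open scoped Classical in
/-- Coefficient sequence `β(a)` of the slice Blaschke factor `B_a`:
`β(a)_0 = a²/|a|`, `β(a)_n = -conj(a)^{n-1}(1-|a|²)(a/|a|)` for `n ≥ 1`,
with the convention `β(0)_n = 1` iff `n = 1` (that is, `B_0(q) = q`). -/
def betaC (a : ℍ) : ℕ → ℍ :=
  if a = 0 then fun n => if n = 1 then 1 else 0
  else fun n =>
    if n = 0 then a ^ 2 / (‖a‖ : ℍ)
    else -((star a) ^ (n - 1) * ((1 - ‖a‖ ^ 2 : ℝ) : ℍ) * (a / (‖a‖ : ℍ)))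

/-- The identity for the Cauchy product: coefficient sequence of the constant `1`. -/
def deltaSeq : ℕ → ℍ := fun n => if n = 0 then 1 else 0

/-- Coefficient sequence of the Blaschke product `B_{a_0} * ⋯ * B_{a_{k-1}}`
(0-indexed; `Bprod a 0` is the empty product, i.e. the constant `1`). -/
def Bprod (a : ℕ → ℍ) : ℕ → (ℕ → ℍ)
  | 0 => deltaSeq
  | k + 1 => cprod (Bprod a k) (betaC (a k))

/-- Coefficient sequence of the `k`-th slice Takenaka–Malmquist function
`T_{k+1} = B_{a_0} * ⋯ * B_{a_{k-1}} * e_{a_k}` (0-indexed). -/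
def tau (a : ℕ → ℍ) (k : ℕ) : ℕ → ℍ := cprod (Bprod a k) (eps (a k))

/-- `e^{It} = cos t + I sin t`. -/
def expI (I : ℍ) (t : ℝ) : ℍ := ((Real.cos t : ℝ) : ℍ) + ((Real.sin t : ℝ) : ℍ) * I

/-!
On the circle, `conj(e_a(e^{It})) = √(1-|a|²) Σ_n a^n e^{-Int}`, so the integrand is
`√(1-|a|²)` times the absolutely convergent double series `Σ_{n,m} a^n e^{I(m-n)t} c_m`.
Integrating termwise, `e^{Ikt}` has mean `δ_{k0}` over `[0, 2π]`, so only the diagonal `m = n`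
survives and the mean is `√(1-|a|²) Σ_n a^n c_n = √(1-|a|²) F_c(a)`. Noncommutativity is harmless
because every term keeps the order `a^n · e^{Ikt} · c_m`.
-/

open Real

theorem HasSum.ite_diag {α ι : Type*} [AddCommMonoid α] [TopologicalSpace α]
    [DecidableEq ι] {g : ι × ι → α} {s : α} (hg : HasSum (fun n => g (n, n)) s) :
    HasSum (fun z : ι × ι => if z.1 = z.2 then g z else 0) s := by
  have hdiag : Function.Injective fun n : ι => (n, n) := fun _ _ h => (Prod.mk.inj h).1
  refine (hdiag.hasSum_iff fun z hz => if_neg fun h => hz ⟨z.1, Prod.ext rfl h⟩).1 ?_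
  simpa [Function.comp_def] using hg

theorem intervalIntegral.hasSum_integral_of_norm_le {ι E : Type*} [Countable ι]
    [NormedAddCommGroup E] [NormedSpace ℝ E] [CompleteSpace E] {F : ι → ℝ → E} {b : ι → ℝ}
    (hF : ∀ i, Continuous (F i)) (hb : Summable b) (hFb : ∀ i t, ‖F i t‖ ≤ b i) (x y : ℝ) :
    HasSum (fun i => ∫ t in x..y, F i t) (∫ t in x..y, ∑' i, F i t) :=
  hasSum_integral_of_dominated_convergence (fun i _ => b i)
    (fun i => (hF i).aestronglyMeasurable) (fun i => .of_forall fun t _ => hFb i t)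
    (.of_forall fun _ _ => hb) intervalIntegrable_const
    (.of_forall fun t _ => (Summable.of_norm_bounded hb fun i => hFb i t).hasSum)

theorem integral_cos_int_mul {k : ℤ} (hk : k ≠ 0) : ∫ t in (0 : ℝ)..2 * π, cos (k * t) = 0 := by
  have hk' : (k : ℝ) ≠ 0 := Int.cast_ne_zero.mpr hk
  have hsin : sin (k * (2 * π)) = 0 := by
    rw [show (k : ℝ) * (2 * π) = (2 * k : ℤ) * π by push_cast; ring, sin_int_mul_pi]
  simp [intervalIntegral.integral_comp_mul_left _ hk', integral_cos, hsin]

theorem integral_sin_int_mul (k : ℤ) : ∫ t in (0 : ℝ)..2 * π, sin (k * t) = 0 := by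
  rcases eq_or_ne k 0 with rfl | hk
  · simp
  · have hk' : (k : ℝ) ≠ 0 := Int.cast_ne_zero.mpr hk
    simp [intervalIntegral.integral_comp_mul_left _ hk', integral_sin, cos_int_mul_two_pi]

theorem summable_norm_pow_mul {R : Type*} [NormedRing R] [NormOneClass R] {c : ℕ → R}
    (hc : Summable fun n => ‖c n‖) {q : R} (hq : ‖q‖ ≤ 1) :
    Summable fun n => ‖q ^ n * c n‖ :=
  hc.of_nonneg_of_le (fun _ => norm_nonneg _) fun n => by
    grw [norm_mul_le, norm_pow_le, pow_le_one₀ (norm_nonneg q) hq, one_mul]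

theorem Quaternion.star_eq_neg_of_sq_eq_neg_one {q : ℍ} (hq : q ^ 2 = -1) : star q = -q := by
  have hsq : normSq q ^ 2 = 1 := by rw [← map_pow, hq]; simp
  have hnormSq : normSq q = 1 := (pow_eq_one_iff_of_nonneg normSq_nonneg two_ne_zero).1 hsq
  exact star_eq_neg.2 (sq_eq_neg_normSq.1 (by rw [hq, hnormSq]; simp))

section expI

variable {I : ℍ}

theorem expI_eq (t : ℝ) : expI I t = cos t • (1 : ℍ) + sin t • I := by
  simp [expI, Quaternion.coe_mul_eq_smul, ← Algebra.algebraMap_eq_smul_one]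

theorem mul_expI_mul (p q : ℍ) (t : ℝ) :
    p * expI I t * q = cos t • (p * q) + sin t • (p * I * q) := by
  simp only [expI_eq, mul_add, add_mul, mul_smul_comm, smul_mul_assoc, mul_one]

@[fun_prop]
theorem continuous_expI : Continuous (expI I) := by
  simp only [funext (expI_eq (I := I))]; fun_prop

theorem expI_add (hI : I ^ 2 = -1) (s t : ℝ) : expI I (s + t) = expI I s * expI I t := by
  have hII : I * I = -1 := by rw [← sq, hI]
  simp only [expI_eq, cos_add, sin_add, add_mul, mul_add, smul_mul_assoc, mul_smul_comm, one_mul,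
    mul_one, hII, smul_neg]
  module

theorem star_expI (hI : I ^ 2 = -1) (t : ℝ) : star (expI I t) = expI I (-t) := by
  simp [expI_eq, Quaternion.star_eq_neg_of_sq_eq_neg_one hI]

theorem expI_pow (hI : I ^ 2 = -1) (t : ℝ) (n : ℕ) : expI I t ^ n = expI I (n * t) := by
  induction n with
  | zero => simp [expI]
  | succ n ih => rw [pow_succ, ih, ← expI_add hI]; push_cast; ring_nf

theorem norm_expI (hI : I ^ 2 = -1) (t : ℝ) : ‖expI I t‖ = 1 := by
  have h : ‖expI I t‖ * ‖expI I t‖ = 1 := by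
    have hinv : star (expI I t) * expI I t = 1 := by
      rw [star_expI hI, ← expI_add hI, neg_add_cancel]; simp [expI]
    simpa using congrArg norm hinv
  nlinarith [norm_nonneg (expI I t)]

theorem mean_mul_expI_int_mul_mul (p q : ℍ) (k : ℤ) :
    (2 * π)⁻¹ • ∫ t in (0 : ℝ)..2 * π, p * expI I (k * t) * q = if k = 0 then p * q else 0 := by
  simp only [mul_expI_mul]
  rw [intervalIntegral.integral_add (Continuous.intervalIntegrable (by fun_prop) _ _)
      (Continuous.intervalIntegrable (by fun_prop) _ _),
    intervalIntegral.integral_smul_const, intervalIntegral.integral_smul_const,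
    integral_sin_int_mul, zero_smul, add_zero]
  split_ifs with hk
  · simp only [hk, Int.cast_zero, zero_mul, cos_zero, intervalIntegral.integral_const, sub_zero,
      smul_eq_mul, mul_one, smul_smul, inv_mul_cancel₀ two_pi_pos.ne', one_smul]
  · rw [integral_cos_int_mul hk, zero_smul, smul_zero]

end expI

section szego

variable {I : ℍ} {c : ℕ → ℍ} {a : ℍ}

def szegoTerm (I a : ℍ) (c : ℕ → ℍ) (z : ℕ × ℕ) (t : ℝ) : ℍ :=
  a ^ z.1 * expI I (((z.2 : ℤ) - z.1 : ℤ) * t) * c z.2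

theorem star_tsum_expI_mul_mul_Fc_expI (hI : I ^ 2 = -1) (hc : Summable fun n => ‖c n‖)
    (ha : ‖a‖ < 1) (t : ℝ) :
    star (∑' n : ℕ, expI I (n * t) * star a ^ n) * Fc c (expI I t) =
      ∑' z : ℕ × ℕ, szegoTerm I a c z t := by
  have hstar :
      star (∑' n : ℕ, expI I (n * t) * star a ^ n) = ∑' n : ℕ, a ^ n * expI I (-(n * t)) := by
    simp only [tsum_star, star_mul, star_pow, star_star, star_expI hI]
  have hFc : Fc c (expI I t) = ∑' m : ℕ, expI I (m * t) * c m := by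
    simp only [Fc, expI_pow hI]
  have hsum_left : Summable fun n : ℕ => ‖a ^ n * expI I (-(n * t))‖ := by
    simpa [norm_expI hI] using summable_geometric_of_lt_one (norm_nonneg a) ha
  have hsum_right : Summable fun m : ℕ => ‖expI I (m * t) * c m‖ := by
    simpa [norm_expI hI] using hc
  rw [hstar, hFc, tsum_mul_tsum_of_summable_norm hsum_left hsum_right]
  refine tsum_congr fun z => ?_
  rw [szegoTerm, mul_assoc, ← mul_assoc (expI I _), ← expI_add hI, ← mul_assoc]
  push_cast; ring_nf

theorem norm_szegoTerm (hI : I ^ 2 = -1) (z : ℕ × ℕ) (t : ℝ) :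
    ‖szegoTerm I a c z t‖ = ‖a‖ ^ z.1 * ‖c z.2‖ := by
  simp [szegoTerm, norm_expI hI]

theorem continuous_szegoTerm (z : ℕ × ℕ) : Continuous (szegoTerm I a c z) := by
  unfold szegoTerm; fun_prop

theorem mean_szegoTerm (z : ℕ × ℕ) :
    (2 * π)⁻¹ • ∫ t in (0 : ℝ)..2 * π, szegoTerm I a c z t =
      if z.1 = z.2 then a ^ z.1 * c z.2 else 0 := by
  simp only [szegoTerm, mean_mul_expI_int_mul_mul, sub_eq_zero, Nat.cast_inj, eq_comm]

end szego

/-- reproducing property of the slice normalized Szegő kernel. -/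
theorem szego_reproducing (c : ℕ → ℍ) (hc : Summable fun n => ‖c n‖)
    (a : ℍ) (ha : ‖a‖ < 1) (I : ℍ) (hI : I ^ 2 = -1) :
    (2 * Real.pi)⁻¹ •
        ∫ t in (0 : ℝ)..(2 * Real.pi),
          star (Real.sqrt (1 - ‖a‖ ^ 2) • ∑' n : ℕ, expI I (n * t) * (star a) ^ n) *
            Fc c (expI I t)
      = Real.sqrt (1 - ‖a‖ ^ 2) • Fc c a := by
  have hbound : Summable fun z : ℕ × ℕ => ‖a‖ ^ z.1 * ‖c z.2‖ :=
    (summable_geometric_of_lt_one (norm_nonneg a) ha).mul_of_nonneg hc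
      (fun _ => by positivity) (fun _ => norm_nonneg _)
  have hmeans := (intervalIntegral.hasSum_integral_of_norm_le continuous_szegoTerm hbound
    (fun z t => (norm_szegoTerm hI z t).le) 0 (2 * π)).const_smul (2 * π)⁻¹
  simp only [mean_szegoTerm] at hmeans
  have hFc : HasSum (fun n => a ^ n * c n) (Fc c a) :=
    (summable_norm_pow_mul hc ha.le).of_norm.hasSum
  simp only [Quaternion.star_smul, smul_mul_assoc, star_tsum_expI_mul_mul_Fc_expI hI hc ha,
    intervalIntegral.integral_smul]
  rw [smul_comm, (hFc.ite_diag (g := fun z => a ^ z.1 * c z.2)).unique hmeans]
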